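/- Groth signature soundness for fixed randomness structure: if (R̂, S, T) with R̂ = Ĝ^r for some r ∈ ℤ_p* satisfies both verification equations under pk = Ĝ^x with a non-degenerate pairing, then S = (Y·G^x)^{1/r} and T = (Y^x·M)^{1/r}; in particular the message M is uniquely determined by (R̂, S, T, pk). -/

import Mathlib

/-!
Pairing against `Ĝ` is an injective homomorphism `G1 → GT`, and by bilinearity
`e (S ^ r) Ĝ = e S (Ĝ ^ r) = e S R̂`. So each verification equation, rewritten as an
equality of pairings against `Ĝ`, becomes `S ^ r = Y * G ^ x` (resp. `T ^ r = Y ^ x * M`)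
in `G1`; raising to the power `r⁻¹` is legitimate because `G1` has exponent dividing `p`.
-/

theorem ZMod.val_mul_val_inv_modEq {n : ℕ} (u : (ZMod n)ˣ) :
    (u : ZMod n).val * ((u⁻¹ : (ZMod n)ˣ) : ZMod n).val ≡ 1 [MOD n] := by
  rw [Nat.ModEq, ← ZMod.val_mul, ← Units.val_mul, mul_inv_cancel, Units.val_one,
    ZMod.val_one_eq_one_mod]

theorem pow_val_pow_val_inv {G : Type*} [Group G] {n : ℕ} {g : G} (hg : g ^ n = 1)
    (u : (ZMod n)ˣ) : (g ^ (u : ZMod n).val) ^ ((u⁻¹ : (ZMod n)ˣ) : ZMod n).val = g := by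
  rw [← pow_mul, ← pow_one g, ← pow_mul, one_mul, pow_eq_pow_iff_modEq]
  exact (ZMod.val_mul_val_inv_modEq u).of_dvd (orderOf_dvd_of_pow_eq_one hg)

section Pairing

variable {G1 G2 GT : Type*} [CommGroup G1] [CommGroup G2] [CommGroup GT] (e : G1 → G2 → GT)

theorem pairing_pow_left_eq_pow_right
    (hbil1 : ∀ (A A' : G1) (B : G2), e (A * A') B = e A B * e A' B)
    (hbil2 : ∀ (A : G1) (B B' : G2), e A (B * B') = e A B * e A B') (A : G1) (B : G2) (n : ℕ) :
    e (A ^ n) B = e A (B ^ n) :=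
  (map_pow (MonoidHom.mk' (e · B) fun A A' => hbil1 A A' B) A n).trans
    (map_pow (MonoidHom.mk' (e A) (hbil2 A)) B n).symm

theorem pow_eq_of_pairing_eq
    (hbil1 : ∀ (A A' : G1) (B : G2), e (A * A') B = e A B * e A' B)
    (hbil2 : ∀ (A : G1) (B B' : G2), e A (B * B') = e A B * e A B')
    {Ghat Rhat : G2} (hnd : ∀ A B : G1, e A Ghat = e B Ghat → A = B) {n : ℕ} (hR : Rhat = Ghat ^ n) {S Z : G1} (h : e S Rhat = e Z Ghat) : S ^ n = Z :=
  hnd _ _ (by rw [pairing_pow_left_eq_pow_right e hbil1 hbil2, ← hR, h])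

end Pairing

theorem groth_soundness_general {G1 G2 GT : Type*} [CommGroup G1] [CommGroup G2] [CommGroup GT]
    (p : ℕ)
    (e : G1 → G2 → GT)
    (hbil1 : ∀ (A A' : G1) (B : G2), e (A * A') B = e A B * e A' B)
    (hbil2 : ∀ (A : G1) (B B' : G2), e A (B * B') = e A B * e A B')
    (hord1 : ∀ g : G1, g ^ p = 1)
    (G : G1) (Ghat : G2) (Y : G1)
    (hnd : ∀ A B : G1, e A Ghat = e B Ghat → A = B) (x r : (ZMod p)ˣ) (M : G1)
    (pk : G2) (hpk : pk = Ghat ^ ((x : ZMod p)).val)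
    (Rhat : G2) (hR : Rhat = Ghat ^ ((r : ZMod p)).val)
    (S T : G1)
    (hv1 : e S Rhat = e Y Ghat * e G pk)
    (hv2 : e T Rhat = e Y pk * e M Ghat) :
    S = (Y * G ^ ((x : ZMod p)).val) ^ (((r⁻¹ : (ZMod p)ˣ) : ZMod p)).val ∧
      T = (Y ^ ((x : ZMod p)).val * M) ^ (((r⁻¹ : (ZMod p)ˣ) : ZMod p)).val ∧
      ∀ M' : G1, e T Rhat = e Y pk * e M' Ghat → M' = M := by
  have hpow := pairing_pow_left_eq_pow_right e hbil1 hbil2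
  have hS : S ^ (r : ZMod p).val = Y * G ^ (x : ZMod p).val :=
    pow_eq_of_pairing_eq e hbil1 hbil2 hnd hR (by rw [hv1, hbil1, hpow, hpk])
  have hT : T ^ (r : ZMod p).val = Y ^ (x : ZMod p).val * M :=
    pow_eq_of_pairing_eq e hbil1 hbil2 hnd hR (by rw [hv2, hbil1, hpow, hpk])
  refine ⟨?_, ?_, fun M' hM' => hnd _ _ (mul_left_cancel (hM'.symm.trans hv2))⟩
  · rw [← hS, pow_val_pow_val_inv (hord1 S)]
  · rw [← hT, pow_val_pow_val_inv (hord1 T)]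

/-- Groth signature soundness for fixed randomness structure: if `(R̂, S, T)` with
`R̂ = Ĝ^r` satisfies both verification equations under `pk = Ĝ^x` for a
non-degenerate pairing, then `S = (Y·G^x)^{1/r}` and `T = (Y^x·M)^{1/r}`; in
particular the message `M` is uniquely determined by `(R̂, S, T, pk)`. -/
theorem groth_soundness {G1 G2 GT : Type*} [CommGroup G1] [CommGroup G2] [CommGroup GT]
    (p : ℕ) (hp : p.Prime)
    (e : G1 → G2 → GT)
    (hbil1 : ∀ (A A' : G1) (B : G2), e (A * A') B = e A B * e A' B)
    (hbil2 : ∀ (A : G1) (B B' : G2), e A (B * B') = e A B * e A B')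
    (hord1 : ∀ g : G1, g ^ p = 1) (hord2 : ∀ g : G2, g ^ p = 1)
    (hordT : ∀ g : GT, g ^ p = 1)
    (G : G1) (Ghat : G2) (Y : G1)
    (hnd : ∀ A B : G1, e A Ghat = e B Ghat → A = B) (x r : (ZMod p)ˣ) (M : G1)
    (pk : G2) (hpk : pk = Ghat ^ ((x : ZMod p)).val)
    (Rhat : G2) (hR : Rhat = Ghat ^ ((r : ZMod p)).val)
    (S T : G1)
    (hv1 : e S Rhat = e Y Ghat * e G pk)
    (hv2 : e T Rhat = e Y pk * e M Ghat) :
    S = (Y * G ^ ((x : ZMod p)).val) ^ (((r⁻¹ : (ZMod p)ˣ) : ZMod p)).val ∧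
      T = (Y ^ ((x : ZMod p)).val * M) ^ (((r⁻¹ : (ZMod p)ˣ) : ZMod p)).val ∧
      ∀ M' : G1, e T Rhat = e Y pk * e M' Ghat → M' = M :=
  groth_soundness_general p e hbil1 hbil2 hord1 G Ghat Y hnd x r M pk hpk Rhat hR S T hv1 hv2
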